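/- Let n be a natural number, let μ ∈ ℍ be nonzero, and let f : ℍ → ℍ be the power function f(p) = pⁿ. Then for every q ∈ ℍ the left GHR derivatives satisfy (∂f/∂q^μ)(q)·μ = Σ_{m=1}^{n} q^{n−m}·Re(q^{m−1}·μ) and (∂f/∂q^{μ*})(q)·μ = −(1/2) Σ_{m=1}^{n} q^{n−m}·(q^{m−1}·μ)*, where Re(p) denotes the real (scalar) part of p embedded in ℍ. -/

import Mathlib

open Quaternion Filter Topology Asymptotics

noncomputable section

/-- The imaginary unit `i` of the real quaternions. -/
def qI : ℍ[ℝ] := ⟨0, 1, 0, 0⟩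
/-- The imaginary unit `j` of the real quaternions. -/
def qJ : ℍ[ℝ] := ⟨0, 0, 1, 0⟩
/-- The imaginary unit `k` of the real quaternions. -/
def qK : ℍ[ℝ] := ⟨0, 0, 0, 1⟩

/-- Quaternion rotation `p ↦ μ p μ⁻¹`. -/
def qRot (μ p : ℍ[ℝ]) : ℍ[ℝ] := μ * p * μ⁻¹

/-- The left GHR derivative `∂f/∂q^μ` at `q`. -/
def lD (f : ℍ[ℝ] → ℍ[ℝ]) (μ q : ℍ[ℝ]) : ℍ[ℝ] :=
  (4 : ℍ[ℝ])⁻¹ * (fderiv ℝ f q 1 - fderiv ℝ f q qI * qRot μ qI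
    - fderiv ℝ f q qJ * qRot μ qJ - fderiv ℝ f q qK * qRot μ qK)

/-- The left conjugate GHR derivative `∂f/∂q^{μ*}` at `q`. -/
def lDc (f : ℍ[ℝ] → ℍ[ℝ]) (μ q : ℍ[ℝ]) : ℍ[ℝ] :=
  (4 : ℍ[ℝ])⁻¹ * (fderiv ℝ f q 1 + fderiv ℝ f q qI * qRot μ qI
    + fderiv ℝ f q qJ * qRot μ qJ + fderiv ℝ f q qK * qRot μ qK)

/-- The right GHR derivative `∂ᵣf/∂q^μ` at `q`. -/
def rD (f : ℍ[ℝ] → ℍ[ℝ]) (μ q : ℍ[ℝ]) : ℍ[ℝ] :=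
  (4 : ℍ[ℝ])⁻¹ * (fderiv ℝ f q 1 - qRot μ qI * fderiv ℝ f q qI
    - qRot μ qJ * fderiv ℝ f q qJ - qRot μ qK * fderiv ℝ f q qK)

/-- The right conjugate GHR derivative `∂ᵣf/∂q^{μ*}` at `q`. -/
def rDc (f : ℍ[ℝ] → ℍ[ℝ]) (μ q : ℍ[ℝ]) : ℍ[ℝ] :=
  (4 : ℍ[ℝ])⁻¹ * (fderiv ℝ f q 1 + qRot μ qI * fderiv ℝ f q qI
    + qRot μ qJ * fderiv ℝ f q qJ + qRot μ qK * fderiv ℝ f q qK)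


/-! The derivative of `p ↦ pⁿ` at `q` is `v ↦ ∑ qⁿ⁻ᵐ v qᵐ⁻¹`. After multiplying on the right by `μ`,
the factor `qRot μ v * μ = μ v` turns each GHR derivative into a sum over `m` of
`qⁿ⁻ᵐ (y ∓ i y i ∓ j y j ∓ k y k) / 4` with `y = qᵐ⁻¹ μ`, and both signs are evaluated by
`i y i + j y j + k y k = -y - 2 y*`: they give `Re y` and `-y*/2`. -/

theorem fderiv_pow_apply_eq_sum_Icc {𝕜 𝔸 : Type*} [NontriviallyNormedField 𝕜] [NormedRing 𝔸]
    [NormedAlgebra 𝕜 𝔸] (n : ℕ) (x v : 𝔸) :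
    fderiv 𝕜 (fun x : 𝔸 => x ^ n) x v = ∑ m ∈ Finset.Icc 1 n, x ^ (n - m) * v * x ^ (m - 1) := by
  rw [fderiv_pow_ring', ← Finset.Ico_add_one_right_eq_Icc, Finset.sum_Ico_eq_sum_range,
    add_tsub_cancel_right, FunLike.coe_sum, Finset.sum_apply]
  refine Finset.sum_congr rfl fun i _ => ?_
  simp [Nat.sub_sub, add_comm]

theorem qRot_mul_of_ne_zero {μ : ℍ[ℝ]} (hμ : μ ≠ 0) (p : ℍ[ℝ]) : qRot μ p * μ = μ * p := by
  rw [qRot, mul_assoc, inv_mul_cancel₀ hμ, mul_one]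

theorem inv_ofNat_mul_eq_smul (c : ℕ) [c.AtLeastTwo] (x : ℍ[ℝ]) :
    (OfNat.ofNat c : ℍ[ℝ])⁻¹ * x = (OfNat.ofNat c : ℝ)⁻¹ • x := by
  rw [← Quaternion.coe_mul_eq_smul, Quaternion.coe_inv]; rfl

theorem qI_mul_mul_qI_add_qJ_mul_mul_qJ_add_qK_mul_mul_qK (y : ℍ[ℝ]) :
    qI * y * qI + qJ * y * qJ + qK * y * qK = -y - (2 : ℝ) • star y := by
  ext <;> simp [Quaternion.re_mul, Quaternion.imI_mul, Quaternion.imJ_mul, Quaternion.imK_mul] <;>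
    simp [qI, qJ, qK] <;> ring

theorem inv_four_smul_sandwich_sub_eq_re (y : ℍ[ℝ]) :
    (4 : ℝ)⁻¹ • (y - qI * y * qI - qJ * y * qJ - qK * y * qK) = (y.re : ℍ[ℝ]) := by
  rw [sub_sub, sub_sub, ← add_assoc, qI_mul_mul_qI_add_qJ_mul_mul_qJ_add_qK_mul_mul_qK]
  calc (4 : ℝ)⁻¹ • (y - (-y - (2 : ℝ) • star y)) = (2 : ℝ)⁻¹ • (y + star y) := by module
    _ = (y.re : ℍ[ℝ]) := by
      rw [Quaternion.self_add_star', Quaternion.smul_coe, inv_mul_cancel_left₀ two_ne_zero]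

theorem inv_four_smul_sandwich_add_eq_star (y : ℍ[ℝ]) :
    (4 : ℝ)⁻¹ • (y + qI * y * qI + qJ * y * qJ + qK * y * qK) = -(2 : ℝ)⁻¹ • star y := by
  rw [add_assoc, add_assoc, ← add_assoc (qI * _ * _),
    qI_mul_mul_qI_add_qJ_mul_mul_qJ_add_qK_mul_mul_qK]
  module

section SandwichDerivative

variable {f : ℍ[ℝ] → ℍ[ℝ]} {μ q : ℍ[ℝ]} {ι : Type*} {s : Finset ι} {a b : ι → ℍ[ℝ]}

theorem fderiv_mul_qRot_mul_of_fderiv_eq_sum (hμ : μ ≠ 0)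
    (hf : ∀ v, fderiv ℝ f q v = ∑ m ∈ s, a m * v * b m) (v : ℍ[ℝ]) :
    fderiv ℝ f q v * qRot μ v * μ = ∑ m ∈ s, a m * (v * (b m * μ) * v) := by
  rw [mul_assoc, qRot_mul_of_ne_zero hμ, hf, Finset.sum_mul]
  simp only [mul_assoc]

theorem lD_mul_eq_sum_of_fderiv_eq_sum (hμ : μ ≠ 0)
    (hf : ∀ v, fderiv ℝ f q v = ∑ m ∈ s, a m * v * b m) :
    lD f μ q * μ = ∑ m ∈ s, a m * ((b m * μ).re : ℍ[ℝ]) := by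
  have hD := fderiv_mul_qRot_mul_of_fderiv_eq_sum hμ hf
  have hD1 : fderiv ℝ f q 1 * μ = ∑ m ∈ s, a m * (b m * μ) := by
    simpa [qRot, hμ] using hD 1
  rw [lD, inv_ofNat_mul_eq_smul, smul_mul_assoc, sub_mul, sub_mul, sub_mul, hD1, hD, hD, hD,
    ← Finset.sum_sub_distrib, ← Finset.sum_sub_distrib, ← Finset.sum_sub_distrib, Finset.smul_sum]
  refine Finset.sum_congr rfl fun m _ => ?_
  rw [← mul_sub, ← mul_sub, ← mul_sub, ← mul_smul_comm, inv_four_smul_sandwich_sub_eq_re]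

theorem lDc_mul_eq_sum_of_fderiv_eq_sum (hμ : μ ≠ 0)
    (hf : ∀ v, fderiv ℝ f q v = ∑ m ∈ s, a m * v * b m) :
    lDc f μ q * μ = -(2 : ℍ[ℝ])⁻¹ * ∑ m ∈ s, a m * star (b m * μ) := by
  have hD := fderiv_mul_qRot_mul_of_fderiv_eq_sum hμ hf
  have hD1 : fderiv ℝ f q 1 * μ = ∑ m ∈ s, a m * (b m * μ) := by
    simpa [qRot, hμ] using hD 1
  rw [lDc, inv_ofNat_mul_eq_smul, neg_mul, inv_ofNat_mul_eq_smul, smul_mul_assoc, add_mul,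
    add_mul, add_mul, hD1, hD, hD, hD, ← Finset.sum_add_distrib, ← Finset.sum_add_distrib,
    ← Finset.sum_add_distrib, Finset.smul_sum, ← neg_smul, Finset.smul_sum]
  refine Finset.sum_congr rfl fun m _ => ?_
  rw [← mul_add, ← mul_add, ← mul_add, ← mul_smul_comm, inv_four_smul_sandwich_add_eq_star,
    mul_smul_comm]

end SandwichDerivative

theorem left_GHR_derivative_power_function
    (n : ℕ) (μ : ℍ[ℝ]) (hμ : μ ≠ 0) (q : ℍ[ℝ]) :
    lD (fun p => p ^ n) μ q * μ
      = ∑ m ∈ Finset.Icc 1 n, q ^ (n - m) * (((q ^ (m - 1) * μ).re : ℝ) : ℍ[ℝ]) ∧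
    lDc (fun p => p ^ n) μ q * μ
      = -(2 : ℍ[ℝ])⁻¹ * ∑ m ∈ Finset.Icc 1 n, q ^ (n - m) * star (q ^ (m - 1) * μ) :=
  ⟨lD_mul_eq_sum_of_fderiv_eq_sum hμ (fderiv_pow_apply_eq_sum_Icc n q),
    lDc_mul_eq_sum_of_fderiv_eq_sum hμ (fderiv_pow_apply_eq_sum_Icc n q)⟩

end
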